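/- For every natural number j ≥ 1, the series ∑_{r=1}^∞ arctan( 5·√(L_{4j})·F_{2j}·F_{4jr−1} / L_{8jr−2} ) converges and its sum equals arctan( √(L_{4j}) / L_{2j−1} ). -/

import Mathlib

def lucas : ℕ → ℕ
  | 0 => 2
  | 1 => 1
  | n + 2 => lucas (n + 1) + lucas n

/-! With `C = √L_{4j}` and the odd indices `n_r = 4jr + 2j - 1`, the `r`-th term equals
`arctan (C / L_{n_r}) - arctan (C / L_{n_{r+1}})`: by the subtraction formula for `arctan` this
reduces to the Binet-type identities `L_{n+4j} - L_n = 5 F_{2j} F_{n+2j}` and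
`L_n L_{n+4j} + L_{4j} = L_{2n+4j}` (for odd `n`). The series telescopes, and
`arctan (C / L_n) → 0`. -/

open Filter Topology Real
open scoped goldenRatio

lemma lucas_add_two (n : ℕ) : lucas (n + 2) = lucas (n + 1) + lucas n := rfl

lemma lucas_pos (n : ℕ) : 0 < lucas n := by
  induction n using Nat.twoStepInduction with
  | zero | one => decide
  | more n h0 h1 => rw [lucas_add_two]; omega

lemma le_lucas (n : ℕ) : n ≤ lucas n := by
  induction n using Nat.twoStepInduction with
  | zero => exact Nat.zero_le _
  | one => exact le_rfl
  | more n h0 h1 =>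
    rw [lucas_add_two]
    have := lucas_pos n
    omega

lemma tendsto_lucas_atTop : Tendsto (fun n ↦ (lucas n : ℝ)) atTop atTop :=
  tendsto_atTop_mono (fun n ↦ by exact_mod_cast le_lucas n) tendsto_natCast_atTop_atTop

lemma tendsto_arctan_div_lucas (c : ℝ) :
    Tendsto (fun n ↦ arctan (c / lucas n)) atTop (𝓝 0) := by
  simpa [Function.comp_def] using
    (continuous_arctan.tendsto 0).comp (tendsto_lucas_atTop.const_div_atTop c)

lemma coe_lucas_eq (n : ℕ) : (lucas n : ℝ) = φ ^ n + ψ ^ n := by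
  induction n using Nat.twoStepInduction with
  | zero => norm_num [lucas]
  | one => simp [lucas, goldenRatio_add_goldenConj]
  | more n h0 h1 =>
    rw [lucas_add_two, Nat.cast_add, h0, h1]
    linear_combination (-φ ^ n) * goldenRatio_sq - ψ ^ n * goldenConj_sq

lemma lucas_add_two_mul_sub (n k : ℕ) :
    (lucas (n + 2 * k) : ℝ) - (-1) ^ k * lucas n = 5 * Nat.fib k * Nat.fib (n + k) := by
  have h5 : ∀ a b : ℝ, 5 * (a / √5) * (b / √5) = a * b := fun a b ↦ by
    field_simp
    rw [sq_sqrt (by norm_num)]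
    ring
  rw [coe_lucas_eq, coe_lucas_eq, coe_fib_eq, coe_fib_eq, h5, ← goldenRatio_mul_goldenConj]
  -- `ring` would unfold `φ` and `ψ` into expressions in `√5`
  generalize φ = x, ψ = y
  ring

lemma lucas_mul_lucas_add (n k : ℕ) :
    (lucas n : ℝ) * lucas (n + k) = lucas (2 * n + k) + (-1) ^ n * lucas k := by
  simp only [coe_lucas_eq, ← goldenRatio_mul_goldenConj]
  generalize φ = x, ψ = y
  ring

lemma arctan_div_sub_arctan_div {a b : ℝ} (ha : 0 < a) (hb : 0 < b) (c : ℝ) :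
    arctan (c / a) - arctan (c / b) = arctan (c * (b - a) / (a * b + c ^ 2)) := by
  have hprod : c / a * -(c / b) < 1 := by
    have : 0 ≤ c / a * (c / b) := by rw [div_mul_div_comm, ← sq]; positivity
    linarith
  rw [sub_eq_add_neg, ← arctan_neg, arctan_add hprod]
  have hnum : c / a + -(c / b) = c * (b - a) / (a * b) := by field_simp; ring
  have hden : 1 - c / a * -(c / b) = (a * b + c ^ 2) / (a * b) := by field_simp; ring
  rw [hnum, hden, div_div_div_cancel_right₀ (by positivity)]

lemma arctan_div_lucas_sub_arctan_div_lucas {n k : ℕ} (hn : Odd n) (hk : Even k) :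
    arctan (√(lucas (2 * k)) / lucas n) - arctan (√(lucas (2 * k)) / lucas (n + 2 * k)) =
      arctan (5 * √(lucas (2 * k)) * Nat.fib k * Nat.fib (n + k) / lucas (2 * n + 2 * k)) := by
  have hdiff := lucas_add_two_mul_sub n k
  have hprod := lucas_mul_lucas_add n (2 * k)
  rw [hk.neg_one_pow, one_mul] at hdiff
  rw [hn.neg_one_pow, neg_one_mul] at hprod
  rw [arctan_div_sub_arctan_div (by exact_mod_cast lucas_pos _) (by exact_mod_cast lucas_pos _),
    hdiff, sq_sqrt (Nat.cast_nonneg _), hprod]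
  ring_nf

lemma hasSum_of_eq_sub_succ {f g : ℕ → ℝ} (hfg : ∀ n, f n = g n - g (n + 1))
    (hf : ∀ n, 0 ≤ f n) (hg : Tendsto g atTop (𝓝 0)) : HasSum f (g 0) := by
  rw [hasSum_iff_tendsto_nat_of_nonneg hf]
  have hsum : ∀ n, ∑ i ∈ Finset.range n, f i = g 0 - g n := fun n ↦ by
    simp only [hfg, Finset.sum_range_sub']
  simpa [hsum] using tendsto_const_nhds (x := g 0).sub hg

theorem stmt17 (j : ℕ) (hj : 1 ≤ j) :
    HasSum (fun r : ℕ =>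
        Real.arctan (5 * Real.sqrt (lucas (4 * j) : ℝ) * (Nat.fib (2 * j) : ℝ) *
            (Nat.fib (4 * j * (1 + r) - 1) : ℝ) /
          (lucas (8 * j * (1 + r) - 2) : ℝ)))
      (Real.arctan (Real.sqrt (lucas (4 * j) : ℝ) / (lucas (2 * j - 1) : ℝ))) := by
  set u : ℕ → ℕ := fun r ↦ 4 * j * r + 2 * j - 1 with hu
  set g : ℕ → ℝ := fun r ↦ arctan (√(lucas (4 * j)) / lucas (u r))
  have hterm (r : ℕ) : arctan (5 * √(lucas (4 * j)) * Nat.fib (2 * j) *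
      Nat.fib (4 * j * (1 + r) - 1) / lucas (8 * j * (1 + r) - 2)) = g r - g (r + 1) := by
    have e₁ : 4 * j * r = 2 * (2 * (j * r)) := by ring
    have e₂ : 4 * j * (1 + r) = 4 * (j * r) + 4 * j := by ring
    have e₃ : 8 * j * (1 + r) = 8 * (j * r) + 8 * j := by ring
    have e₄ : 4 * j * (r + 1) = 4 * (j * r) + 4 * j := by ring
    have hodd : Odd (u r) := ⟨2 * (j * r) + j - 1, by simp only [hu]; omega⟩
    have key := arctan_div_lucas_sub_arctan_div_lucas hodd (even_two_mul j)
    rw [show u r + 2 * (2 * j) = u (r + 1) by simp only [hu]; omega,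
      show 2 * u r + 2 * (2 * j) = 8 * j * (1 + r) - 2 by simp only [hu]; omega,
      show u r + 2 * j = 4 * j * (1 + r) - 1 by simp only [hu]; omega,
      show 2 * (2 * j) = 4 * j by ring] at key
    exact key.symm
  have hg : Tendsto g atTop (𝓝 0) :=
    (tendsto_arctan_div_lucas _).comp <| tendsto_atTop_mono (fun r ↦ by
      have := Nat.le_mul_of_pos_left r (by omega : 0 < 4 * j)
      show r ≤ 4 * j * r + 2 * j - 1
      omega) tendsto_id
  convert hasSum_of_eq_sub_succ hterm (fun r ↦ arctan_nonneg.2 (by positivity)) hg using 4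
  simp [hu]
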